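/- For a graph G of order n ≥ 2, bdim(G) = n−1 if and only if G is the complete graph K_n or its complement (the empty graph on n vertices). -/
import Mathlib


open SimpleGraph Finset

variable {V : Type*}

/-- truncated distance `d_k(x,y) = min(d(x,y), k+1)` with `d = ∞` across components. -/
noncomputable def truncDist (G : SimpleGraph V) (k : ℕ) (x y : V) : ℕ∞ :=
  min (G.edist x y) (k + 1)

/-- `f` is a resolving broadcast of `G`. -/
def IsResolvingBroadcast (G : SimpleGraph V) (f : V → ℕ) : Prop :=
  ∀ x y : V, x ≠ y → ∃ z : V, 0 < f z ∧ truncDist G (f z) x z ≠ truncDist G (f z) y z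

/-- broadcast dimension -/
noncomputable def bdim (G : SimpleGraph V) [Fintype V] : ℕ :=
  sInf {c : ℕ | ∃ f : V → ℕ, IsResolvingBroadcast G f ∧ ∑ v, f v = c}

/-- adjacency resolving set -/
def IsAdjResolvingSet (G : SimpleGraph V) (S : Set V) : Prop :=
  ∀ x y : V, x ≠ y → ∃ z ∈ S, truncDist G 1 x z ≠ truncDist G 1 y z

/-- adjacency dimension -/
noncomputable def adim (G : SimpleGraph V) [Fintype V] : ℕ :=
  sInf {n : ℕ | ∃ S : Finset V, IsAdjResolvingSet G ↑S ∧ S.card = n}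

/-- resolving set (metric dimension) -/
def IsResolvingSet (G : SimpleGraph V) (S : Set V) : Prop :=
  ∀ x y : V, x ≠ y → ∃ z ∈ S, G.edist x z ≠ G.edist y z

/-- metric dimension -/
noncomputable def mdim (G : SimpleGraph V) [Fintype V] : ℕ :=
  sInf {n : ℕ | ∃ S : Finset V, IsResolvingSet G ↑S ∧ S.card = n}

lemma truncDist_eq_zero_iff (G : SimpleGraph V) (k : ℕ) (x z : V) :
    truncDist G k x z = 0 ↔ x = z := by
  unfold truncDist
  have hk : ((k : ℕ∞) + 1) ≠ 0 := by
    simp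
  constructor
  · intro h
    rcases min_eq_iff.mp h with ⟨h1, -⟩ | ⟨h1, -⟩
    · exact edist_eq_zero_iff.mp h1
    · exact absurd h1 hk
  · intro h; subst h
    simp [SimpleGraph.edist_self]

lemma truncDist_self (G : SimpleGraph V) (k : ℕ) (z : V) : truncDist G k z z = 0 :=
  (truncDist_eq_zero_iff G k z z).mpr rfl

lemma truncDist_ne_zero (G : SimpleGraph V) (k : ℕ) {x z : V} (h : x ≠ z) :
    truncDist G k x z ≠ 0 := fun hc => h ((truncDist_eq_zero_iff G k x z).mp hc)

/-- If a vertex has weight ≥ 1 it resolves itself against everything. -/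
lemma self_resolves (G : SimpleGraph V) (f : V → ℕ) {u w : V} (hf : 0 < f u) (huw : w ≠ u) :
    ∃ z : V, 0 < f z ∧ truncDist G (f z) u z ≠ truncDist G (f z) w z := by
  refine ⟨u, hf, ?_⟩
  rw [truncDist_self]
  exact (truncDist_ne_zero G (f u) huw).symm

/-- the all-ones-except-one broadcast is resolving for any graph -/
lemma mem_bdim_set (G : SimpleGraph V) [Fintype V] [DecidableEq V]
    (hn : 1 ≤ Fintype.card V) :
    Fintype.card V - 1 ∈ {c : ℕ | ∃ f : V → ℕ, IsResolvingBroadcast G f ∧ ∑ v, f v = c} := by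
  obtain ⟨v0⟩ := Fintype.card_pos_iff.mp hn
  refine ⟨fun v => if v = v0 then 0 else 1, ?_, ?_⟩
  · intro x y hxy
    rcases eq_or_ne x v0 with hx | hx
    · have hy : y ≠ v0 := fun h => hxy (hx.trans h.symm)
      obtain ⟨z, hz1, hz2⟩ := self_resolves G (fun v => if v = v0 then 0 else 1)
        (u := y) (w := x) (by simp [hy]) hxy
      exact ⟨z, hz1, hz2.symm⟩
    · exact self_resolves G _ (by simp [hx]) (Ne.symm hxy)
  · have h1 : ∑ v : V, (if v = v0 then 0 else 1) =
        (Finset.univ.filter (fun v => ¬ v = v0)).card := by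
      rw [Finset.card_filter]
      exact Finset.sum_congr rfl fun v _ => by by_cases h : v = v0 <;> simp [h]
    rw [h1, Finset.filter_ne', Finset.card_erase_of_mem (Finset.mem_univ _),
      Finset.card_univ]

lemma truncDist_const_top [DecidableEq V] (k : ℕ) {x z : V} (hx : x ≠ z) :
    truncDist (⊤ : SimpleGraph V) k x z = 1 := by
  unfold truncDist
  rw [edist_eq_one_iff_adj.mpr (by simp [hx] : (⊤ : SimpleGraph V).Adj x z)]
  refine min_eq_left ?_
  exact le_add_self.trans (le_refl _) |>.trans (le_refl _) |>.trans (le_refl _)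

lemma truncDist_const_bot (k : ℕ) {x z : V} (hx : x ≠ z) :
    truncDist (⊥ : SimpleGraph V) k x z = k + 1 := by
  unfold truncDist
  rw [edist_eq_top_of_not_reachable (by rw [reachable_bot]; exact hx)]
  exact min_eq_right le_top

lemma sum_lower_bound [Fintype V] [DecidableEq V] {G : SimpleGraph V}
    (hG : G = ⊤ ∨ G = ⊥) {f : V → ℕ} (hf : IsResolvingBroadcast G f) :
    Fintype.card V - 1 ≤ ∑ v, f v := by
  have hconst : ∀ k : ℕ, ∀ x y z : V, x ≠ z → y ≠ z →
      truncDist G k x z = truncDist G k y z := by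
    intro k x y z hx hy
    rcases hG with rfl | rfl
    · rw [truncDist_const_top k hx, truncDist_const_top k hy]
    · rw [truncDist_const_bot k hx, truncDist_const_bot k hy]
  have hone : (Finset.univ.filter (fun v => f v = 0)).card ≤ 1 := by
    rw [Finset.card_le_one]
    intro a ha b hb
    by_contra hab
    obtain ⟨z, hz1, hz2⟩ := hf a b hab
    simp only [Finset.mem_filter, Finset.mem_univ, true_and] at ha hb
    have hza : a ≠ z := fun h => by rw [h] at ha; omega
    have hzb : b ≠ z := fun h => by rw [h] at hb; omega
    exact hz2 (hconst (f z) a b z hza hzb)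
  have h2 : (Finset.univ.filter (fun v => ¬ f v = 0)).card ≤ ∑ v, f v := by
    rw [Finset.card_filter]
    refine Finset.sum_le_sum fun v _ => ?_
    by_cases h : f v = 0 <;> simp [h] <;> omega
  have h3 := Finset.card_filter_add_card_filter_not
    (s := (Finset.univ : Finset V)) (p := fun v => f v = 0)
  rw [Finset.card_univ] at h3
  omega

lemma exists_config {G : SimpleGraph V} (hT : G ≠ ⊤) (hB : G ≠ ⊥) :
    ∃ z x y : V, G.Adj z x ∧ ¬ G.Adj z y ∧ y ≠ z := by
  -- G has an edge
  obtain ⟨a, b, hab⟩ : ∃ a b, G.Adj a b := by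
    by_contra h
    push_neg at h
    exact hB (by ext u v; simp [h u v])
  -- G has a non-edge between distinct vertices
  obtain ⟨c, d, hcd, hcdn⟩ : ∃ c d, c ≠ d ∧ ¬ G.Adj c d := by
    by_contra h
    push_neg at h
    exact hT (by ext u v; simp only [top_adj]; exact ⟨fun h' => h'.ne, fun h' => h u v h'⟩)
  by_cases ha : ∃ y, y ≠ a ∧ ¬ G.Adj a y
  · obtain ⟨y, hy1, hy2⟩ := ha
    exact ⟨a, b, y, hab, hy2, hy1⟩
  · push_neg at ha
    have hac : a ≠ c := by
      rintro rfl
      exact hcdn (ha d (Ne.symm hcd))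
    have had : a ≠ d := by
      rintro rfl
      exact hcdn ((ha c (Ne.symm hac)).symm)
    exact ⟨c, a, d, ((ha c (Ne.symm hac)).symm), hcdn, Ne.symm hcd⟩

lemma trunc_one_adj {G : SimpleGraph V} {x z : V} (h : G.Adj x z) :
    truncDist G 1 x z = 1 := by
  unfold truncDist
  rw [edist_eq_one_iff_adj.mpr h]
  exact min_eq_left (by norm_num)

lemma trunc_one_nonadj {G : SimpleGraph V} {y z : V} (hne : y ≠ z) (h : ¬ G.Adj y z) :
    truncDist G 1 y z = 2 := by
  unfold truncDist
  have h0 : G.edist y z ≠ 0 := fun hc => hne (edist_eq_zero_iff.mp hc)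
  have h1 : G.edist y z ≠ 1 := fun hc => h (edist_eq_one_iff_adj.mp hc)
  have : 2 ≤ G.edist y z := by
    have hlt : 1 < G.edist y z := lt_of_le_of_ne (Order.one_le_iff_pos.mpr
      (pos_iff_ne_zero.mpr h0)) (Ne.symm h1)
    exact Order.add_one_le_of_lt hlt
  have : min (G.edist y z) ((1 : ℕ) + 1 : ℕ∞) = ((1:ℕ) + 1 : ℕ∞) := min_eq_right (by
    exact_mod_cast this)
  rw [this]
  norm_num

lemma mem_bdim_set_sub2 {G : SimpleGraph V} [Fintype V] [DecidableEq V]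
    (hT : G ≠ ⊤) (hB : G ≠ ⊥) :
    Fintype.card V - 2 ∈ {c : ℕ | ∃ f : V → ℕ, IsResolvingBroadcast G f ∧ ∑ v, f v = c} := by
  obtain ⟨z, x, y, hzx, hzy, hyz⟩ := exists_config hT hB
  have hxy : x ≠ y := fun h => hzy (h ▸ hzx)
  have hxz : x ≠ z := (G.ne_of_adj hzx.symm)
  refine ⟨fun v => if v = x ∨ v = y then 0 else 1, ?_, ?_⟩
  · intro u w huw
    set f : V → ℕ := fun v => if v = x ∨ v = y then 0 else 1 with hfdef
    have hfz : f z = 1 := by simp [hfdef, Ne.symm hxz, Ne.symm hyz]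
    by_cases hu : u = x ∨ u = y
    · by_cases hw : w = x ∨ w = y
      · -- {u,w} = {x,y}
        have hr : truncDist G (f z) x z ≠ truncDist G (f z) y z := by
          rw [hfz, trunc_one_adj hzx.symm, trunc_one_nonadj hyz (fun h => hzy h.symm)]
          norm_num
        rcases hu with rfl | rfl <;> rcases hw with rfl | rfl
        · exact absurd rfl huw
        · exact ⟨z, by omega, hr⟩
        · exact ⟨z, by omega, hr.symm⟩
        · exact absurd rfl huw
      · obtain ⟨z', h1, h2⟩ := self_resolves G f (u := w) (w := u)
          (by simp [hfdef, hw]) huw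
        exact ⟨z', h1, h2.symm⟩
    · exact self_resolves G f (by simp [hfdef, hu]) (Ne.symm huw)
  · have h1 : ∑ v : V, (if v = x ∨ v = y then 0 else 1) =
        (Finset.univ.filter (fun v => ¬ (v = x ∨ v = y))).card := by
      rw [Finset.card_filter]
      exact Finset.sum_congr rfl fun v _ => by by_cases h : v = x ∨ v = y <;> simp [h]
    have h2 : (Finset.univ.filter (fun v => v = x ∨ v = y)) = {x, y} := by
      ext v; simp [Finset.mem_insert]
    have h3 := Finset.card_filter_add_card_filter_not
      (s := (Finset.univ : Finset V)) (p := fun v => v = x ∨ v = y)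
    rw [h2, Finset.card_univ, Finset.card_insert_of_notMem (by simp [hxy]),
      Finset.card_singleton] at h3
    rw [h1]
    omega

theorem stmt_14 {V : Type*} [Fintype V] [DecidableEq V] (G : SimpleGraph V)
    (hn : 2 ≤ Fintype.card V) :
    bdim G = Fintype.card V - 1 ↔ (G = ⊤ ∨ G = ⊥) := by
  constructor
  · intro h
    by_contra hc
    push_neg at hc
    obtain ⟨hT, hB⟩ := hc
    have hle : bdim G ≤ Fintype.card V - 2 := Nat.sInf_le (mem_bdim_set_sub2 hT hB)
    omega
  · intro hG
    refine le_antisymm (Nat.sInf_le (mem_bdim_set G (by omega))) ?_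
    refine le_csInf ⟨_, mem_bdim_set G (by omega)⟩ ?_
    rintro c ⟨f, hf, rfl⟩
    exact sum_lower_bound hG hf
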